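/- Let G = (V,E) be a directed graph with n nodes, source s, sink t, and capacities ν. If, for each k = 1,…,n−1, one repeatedly (m times) augments the current flow by a flow supported on arcs lying on s-t-paths of length exactly k in the current residual network, each such augmentation saturating at least one such arc whenever one exists, then after all iterations the resulting flow is a maximum s-t-flow. -/

import Mathlib

open Finset

noncomputable def resCap {N : ℕ} (ν x : Fin N → Fin N → ℝ) (u v : Fin N) : ℝ :=
  if u < v then ν u v - x u v else if v < u then ν u v + x v u else 0

def IsFeasibleFlow {N : ℕ} (s t : Fin N) (ν x : Fin N → Fin N → ℝ) : Prop :=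
  (∀ u v : Fin N, u < v → -ν v u ≤ x u v ∧ x u v ≤ ν u v) ∧
  (∀ w : Fin N, w ≠ s → w ≠ t →
    ∑ u ∈ univ.filter (· < w), x u w = ∑ v ∈ univ.filter (w < ·), x w v)

noncomputable def flowValue {N : ℕ} (s : Fin N) (x : Fin N → Fin N → ℝ) : ℝ :=
  ∑ v ∈ univ.filter (s < ·), x s v - ∑ u ∈ univ.filter (· < s), x u s

def IsWalk {V : Type*} (A : V → V → Prop) (k : ℕ) (f : Fin (k + 1) → V) : Prop :=
  ∀ i : Fin k, A (f i.castSucc) (f i.succ)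

def OnPath {V : Type*} (A : V → V → Prop) (k : ℕ) (s t a b : V) : Prop :=
  ∃ f : Fin (k + 1) → V, IsWalk A k f ∧ f 0 = s ∧ f (Fin.last k) = t ∧
    ∃ i : Fin k, f i.castSucc = a ∧ f i.succ = b

/-!
Suppose the `s`-`t` distance in the residual network of `x` is at least `k`. Augmenting along
arcs of `s`-`t` paths of length `k` can only create reversals `v → u` of arcs `u → v` lying on
such paths, and these lead from distance layer `p + 1` back to layer `p`. Hence along every arc of
the new residual network the distance from `s` (and to `t`) grows by at most one: the `s`-`t`
distance stays at least `k`, and every `s`-`t` path of length `k` of the new network was already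
one of the old network. So the set of arcs on such paths only shrinks, and strictly, because an
arc on them gets saturated; as it starts with at most `m` arcs, it is empty after the `m` steps
of phase `k`. After the phases `1, …, N - 1` no `s`-`t` path is left, since a shortest one has
fewer than `N` arcs. Then the vertices reachable from `s` form a cut left by no residual arc,
which makes the flow maximum.
-/

inductive HasWalk {V : Type*} (A : V → V → Prop) : V → V → ℕ → Prop
  | nil (u : V) : HasWalk A u u 0
  | cons {u v w : V} {ℓ : ℕ} : A u v → HasWalk A v w ℓ → HasWalk A u w (ℓ + 1)

section Walks

variable {V : Type*} {A : V → V → Prop} {s t u v w a b : V} {k ℓ ℓ' : ℕ}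

namespace HasWalk

lemma eq_of_length_zero (h : HasWalk A u v 0) : u = v := by
  cases h
  rfl

lemma append (h : HasWalk A u v ℓ) (h' : HasWalk A v w ℓ') : HasWalk A u w (ℓ + ℓ') := by
  induction h with
  | nil => simpa using h'
  | cons huv _ ih => simpa [Nat.add_right_comm] using cons huv (ih h')

lemma concat (h : HasWalk A u v ℓ) (hvw : A v w) : HasWalk A u w (ℓ + 1) :=
  h.append (cons hvw (nil w))

lemma exists_isWalk (h : HasWalk A u v ℓ) :
    ∃ f : Fin (ℓ + 1) → V, IsWalk A ℓ f ∧ f 0 = u ∧ f (Fin.last ℓ) = v := by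
  induction h with
  | nil u => exact ⟨fun _ => u, Fin.elim0, rfl, rfl⟩
  | @cons u _ _ _ huv _ ih =>
    obtain ⟨f, hf, rfl, rfl⟩ := ih
    refine ⟨Fin.cons u f, fun i => ?_, rfl, by simp [← Fin.succ_last]⟩
    cases i using Fin.cases with
    | zero => simpa using huv
    | succ i => simpa [← Fin.succ_castSucc] using hf i

lemma exists_onPath (hk : 0 < k) (h : HasWalk A s t k) : ∃ a b, OnPath A k s t a b := by
  obtain ⟨f, hf, h0, hlast⟩ := h.exists_isWalk
  exact ⟨_, _, f, hf, h0, hlast, ⟨0, hk⟩, rfl, rfl⟩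

end HasWalk

lemma IsWalk.hasWalk {f : Fin (k + 1) → V} (hf : IsWalk A k f) {i j : Fin (k + 1)}
    (hij : i ≤ j) : HasWalk A (f i) (f j) (j - i : ℕ) := by
  obtain ⟨i, hi⟩ := i
  obtain ⟨j, hj⟩ := j
  obtain ⟨n, rfl⟩ := Nat.exists_eq_add_of_le (Fin.mk_le_mk.mp hij)
  rw [Nat.add_sub_cancel_left]
  clear hij
  induction n generalizing i with
  | zero => exact .nil _
  | succ n ih =>
    refine .cons (hf ⟨i, by omega⟩) ?_
    simpa [Nat.add_right_comm, Nat.add_assoc] using ih (i + 1) (by omega) (by omega)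

lemma OnPath.exists_hasWalk (h : OnPath A k s t a b) :
    ∃ p q, p + 1 + q = k ∧ HasWalk A s a p ∧ A a b ∧ HasWalk A b t q := by
  obtain ⟨f, hf, rfl, rfl, i, rfl, rfl⟩ := h
  refine ⟨i, k - (i + 1), by omega, ?_, hf i, ?_⟩
  · simpa using hf.hasWalk (Fin.zero_le i.castSucc)
  · simpa using hf.hasWalk (Fin.le_last i.succ)

lemma OnPath.rel (h : OnPath A k s t a b) : A a b := by
  obtain ⟨f, hf, -, -, i, rfl, rfl⟩ := h
  exact hf i

lemma HasWalk.exists_lt_card [Fintype V] (h : HasWalk A u v ℓ) :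
    ∃ ℓ' < Fintype.card V, HasWalk A u v ℓ' := by
  induction ℓ using Nat.strong_induction_on with
  | _ ℓ ih =>
  by_cases hℓ : ℓ < Fintype.card V
  · exact ⟨ℓ, hℓ, h⟩
  obtain ⟨f, hf, rfl, rfl⟩ := h.exists_isWalk
  obtain ⟨i, j, hij, hfij⟩ :=
    Fintype.exists_ne_map_eq_of_card_lt f (by rw [Fintype.card_fin]; omega)
  wlog hlt : i < j generalizing i j
  · exact this j i hij.symm hfij.symm (lt_of_le_of_ne (not_lt.mp hlt) hij.symm)
  have hpre := hf.hasWalk (Fin.zero_le i)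
  rw [hfij] at hpre
  exact ih _ (by simp only [Fin.val_zero, Fin.val_last]; omega)
    (hpre.append (hf.hasWalk (Fin.le_last j)))

end Walks

section Layered

variable {V : Type*} {A A' : V → V → Prop} {s t u v w a b : V} {k n q : ℕ}

structure ReversesShortestPathArcs (A A' : V → V → Prop) (k : ℕ) (s t : V) : Prop where
  not_hasWalk_lt : ∀ ℓ < k, ¬ HasWalk A s t ℓ
  rel_or_onPath : ∀ u v, A' u v → A u v ∨ OnPath A k s t v u

namespace ReversesShortestPathArcs

lemma le_add (hA : ReversesShortestPathArcs A A' k s t) (hsw : HasWalk A s w n)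
    (hwt : HasWalk A w t q) : k ≤ n + q :=
  not_lt.mp fun hlt => hA.not_hasWalk_lt _ hlt (hsw.append hwt)

lemma exists_source_walk_of_rel (hA : ReversesShortestPathArcs A A' k s t) (huv : A' u v)
    (hsu : HasWalk A s u q) : ∃ q' ≤ q + 1, HasWalk A s v q' := by
  rcases hA.rel_or_onPath u v huv with huv | hvu
  · exact ⟨q + 1, le_rfl, hsu.concat huv⟩
  · obtain ⟨p, r, hk, hsv, -, hut⟩ := hvu.exists_hasWalk
    have := hA.le_add hsu hut
    exact ⟨p, by omega, hsv⟩

lemma exists_sink_walk_of_rel (hA : ReversesShortestPathArcs A A' k s t) (huv : A' u v)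
    (hvt : HasWalk A v t q) : ∃ q' ≤ q + 1, HasWalk A u t q' := by
  rcases hA.rel_or_onPath u v huv with huv | hvu
  · exact ⟨q + 1, le_rfl, .cons huv hvt⟩
  · obtain ⟨p, r, hk, hsv, -, hut⟩ := hvu.exists_hasWalk
    have := hA.le_add hsv hvt
    exact ⟨r, by omega, hut⟩

lemma exists_source_walk (hA : ReversesShortestPathArcs A A' k s t) (huw : HasWalk A' u w n)
    (hsu : HasWalk A s u q) : ∃ q' ≤ q + n, HasWalk A s w q' := by
  induction huw generalizing q with
  | nil => exact ⟨q, le_rfl, hsu⟩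
  | cons huv _ ih =>
    obtain ⟨q₁, hq₁, hsv⟩ := hA.exists_source_walk_of_rel huv hsu
    obtain ⟨q₂, hq₂, hsw⟩ := ih hsv
    exact ⟨q₂, by omega, hsw⟩

lemma exists_sink_walk (hA : ReversesShortestPathArcs A A' k s t) (hwu : HasWalk A' w u n)
    (hut : HasWalk A u t q) : ∃ q' ≤ n + q, HasWalk A w t q' := by
  induction hwu with
  | nil => exact ⟨q, by omega, hut⟩
  | cons hwv _ ih =>
    obtain ⟨q₁, hq₁, hvt⟩ := ih hut
    obtain ⟨q₂, hq₂, hwt⟩ := hA.exists_sink_walk_of_rel hwv hvt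
    exact ⟨q₂, by omega, hwt⟩

lemma not_hasWalk_lt' (hA : ReversesShortestPathArcs A A' k s t) :
    ∀ ℓ < k, ¬ HasWalk A' s t ℓ := fun ℓ hℓ h' => by
  obtain ⟨q, hq, h⟩ := hA.exists_source_walk h' (.nil s)
  exact hA.not_hasWalk_lt q (by omega) h

lemma isWalk (hA : ReversesShortestPathArcs A A' k s t) {f : Fin (k + 1) → V}
    (hf : IsWalk A' k f) (h0 : f 0 = s) (hlast : f (Fin.last k) = t) : IsWalk A k f := by
  intro i
  obtain ⟨p₁, hp₁, hs⟩ :=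
    hA.exists_source_walk (h0 ▸ hf.hasWalk (Fin.zero_le i.castSucc)) (.nil s)
  obtain ⟨q₁, hq₁, ht⟩ :=
    hA.exists_sink_walk (hlast ▸ hf.hasWalk (Fin.le_last i.succ)) (.nil t)
  refine (hA.rel_or_onPath _ _ (hf i)).resolve_right fun hrev => ?_
  obtain ⟨p₂, q₂, hk, hs', -, ht'⟩ := hrev.exists_hasWalk
  have := hA.le_add hs ht'
  have := hA.le_add hs' ht
  simp only [Fin.val_castSucc, Fin.val_zero, Fin.val_last, Fin.val_succ] at hp₁ hq₁
  omega

lemma onPath (hA : ReversesShortestPathArcs A A' k s t) (h : OnPath A' k s t a b) :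
    OnPath A k s t a b := by
  obtain ⟨f, hf, h0, hlast, hab⟩ := h
  exact ⟨f, hA.isWalk hf h0 hlast, h0, hlast, hab⟩

end ReversesShortestPathArcs

open Classical in
noncomputable def pathArcs [Fintype V] (A : V → V → Prop) (k : ℕ) (s t : V) :
    Finset (V × V) :=
  univ.filter fun p => OnPath A k s t p.1 p.2

lemma mem_pathArcs [Fintype V] {p : V × V} :
    p ∈ pathArcs A k s t ↔ OnPath A k s t p.1 p.2 := by
  simp [pathArcs]

lemma ReversesShortestPathArcs.pathArcs_subset [Fintype V]
    (hA : ReversesShortestPathArcs A A' k s t) : pathArcs A' k s t ⊆ pathArcs A k s t :=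
  fun _ hp => mem_pathArcs.mpr (hA.onPath (mem_pathArcs.mp hp))

end Layered

section Flows

variable {N : ℕ} {s t u v : Fin N} {ν x x' z : Fin N → Fin N → ℝ}

lemma resCap_of_lt (h : u < v) : resCap ν x u v = ν u v - x u v := by
  simp [resCap, h]

lemma resCap_of_gt (h : v < u) : resCap ν x u v = ν u v + x v u := by
  simp [resCap, h, h.not_gt]

lemma resCap_self : resCap ν x u u = 0 := by
  simp [resCap]

def resGraph (ν x : Fin N → Fin N → ℝ) (u v : Fin N) : Prop :=
  0 < resCap ν x u v

noncomputable def netOut (z : Fin N → Fin N → ℝ) (w : Fin N) : ℝ :=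
  ∑ v ∈ univ.filter (w < ·), z w v - ∑ u ∈ univ.filter (· < w), z u w

lemma netOut_sub (w : Fin N) : netOut (x' - x) w = netOut x' w - netOut x w := by
  simp only [netOut, Pi.sub_apply, sum_sub_distrib]
  ring

lemma netOut_eq_zero_iff {w : Fin N} : netOut z w = 0 ↔
    ∑ u ∈ univ.filter (· < w), z u w = ∑ v ∈ univ.filter (w < ·), z w v :=
  sub_eq_zero.trans eq_comm

lemma isFeasibleFlow_iff : IsFeasibleFlow s t ν x ↔
    (∀ u v, u < v → -ν v u ≤ x u v ∧ x u v ≤ ν u v) ∧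
      ∀ w, w ≠ s → w ≠ t → netOut x w = 0 := by
  simp only [IsFeasibleFlow, netOut_eq_zero_iff]

lemma isFeasibleFlow_zero (hν : ∀ u v, 0 ≤ ν u v) : IsFeasibleFlow s t ν 0 :=
  isFeasibleFlow_iff.mpr
    ⟨fun u v _ => ⟨by simpa using hν v u, hν u v⟩, fun w _ _ => by simp [netOut]⟩

lemma sum_mul_netOut (z : Fin N → Fin N → ℝ) (c : Fin N → ℝ) :
    ∑ w, c w * netOut z w =
      ∑ p ∈ univ.filter (fun p : Fin N × Fin N => p.1 < p.2), z p.1 p.2 * (c p.1 - c p.2) := by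
  rw [sum_filter, ← univ_product_univ, sum_product]
  simp only [netOut, mul_sub, mul_sum, sum_sub_distrib, sum_filter, mul_ite, mul_zero]
  rw [sum_comm (f := fun w u => if u < w then c w * z u w else 0)]
  simp only [← sum_sub_distrib]
  refine sum_congr rfl fun u _ => sum_congr rfl fun v _ => ?_
  split_ifs <;> ring

lemma flowValue_eq_sum (hz : ∀ w, w ≠ s → w ≠ t → netOut z w = 0) {c : Fin N → ℝ}
    (hs : c s = 1) (ht : c t = 0) :
    flowValue s z =
      ∑ p ∈ univ.filter (fun p : Fin N × Fin N => p.1 < p.2), z p.1 p.2 * (c p.1 - c p.2) := by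
  rw [← sum_mul_netOut, sum_eq_single s]
  · simp [hs, flowValue, netOut]
  · intro w _ hws
    rcases eq_or_ne w t with rfl | hwt
    · simp [ht]
    · simp [hz w hws hwt]
  · simp

lemma flowValue_le_of_closed (hx : IsFeasibleFlow s t ν x) (hx' : IsFeasibleFlow s t ν x')
    (R : Set (Fin N)) (hs : s ∈ R) (ht : t ∉ R)
    (hR : ∀ u v, u ∈ R → resGraph ν x u v → v ∈ R) :
    flowValue s x' ≤ flowValue s x := by
  classical
  let c : Fin N → ℝ := fun v => if v ∈ R then 1 else 0
  have hcs : c s = 1 := by simp [c, hs]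
  have hct : c t = 0 := by simp [c, ht]
  rw [← sub_nonpos, flowValue_eq_sum (isFeasibleFlow_iff.mp hx').2 hcs hct,
    flowValue_eq_sum (isFeasibleFlow_iff.mp hx).2 hcs hct, ← sum_sub_distrib]
  refine sum_nonpos fun ⟨u, v⟩ huv => ?_
  replace huv : u < v := (mem_filter.mp huv).2
  obtain ⟨hlo, hhi⟩ := hx'.1 u v huv
  by_cases hu : u ∈ R <;> by_cases hv : v ∈ R
  · simp [c, hu, hv]
  · have hcut : ¬ resGraph ν x u v := fun h => hv (hR u v hu h)
    rw [resGraph, resCap_of_lt huv, not_lt] at hcut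
    have hc : c u - c v = 1 := by simp [c, hu, hv]
    rw [hc]
    linarith
  · have hcut : ¬ resGraph ν x v u := fun h => hu (hR v u hv h)
    rw [resGraph, resCap_of_gt huv, not_lt] at hcut
    have hc : c u - c v = -1 := by simp [c, hu, hv]
    rw [hc]
    linarith
  · simp [c, hu, hv]

lemma flowValue_le_of_not_hasWalk (hx : IsFeasibleFlow s t ν x)
    (hst : ∀ ℓ, ¬ HasWalk (resGraph ν x) s t ℓ) (hx' : IsFeasibleFlow s t ν x') :
    flowValue s x' ≤ flowValue s x :=
  flowValue_le_of_closed hx hx' {v | ∃ ℓ, HasWalk (resGraph ν x) s v ℓ} ⟨0, .nil s⟩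
    (fun ⟨ℓ, h⟩ => hst ℓ h) fun _ _ ⟨ℓ, h⟩ huv => ⟨ℓ + 1, h.concat huv⟩

end Flows

section Augmentation

variable {N : ℕ} {s t a b : Fin N} {ν x x' : Fin N → Fin N → ℝ} {k : ℕ}

structure IsLayeredAugmentation (ν : Fin N → Fin N → ℝ) (s t : Fin N) (k : ℕ)
    (x x' : Fin N → Fin N → ℝ) : Prop where
  le_resCap : ∀ u v, u < v →
    -resCap ν x v u ≤ x' u v - x u v ∧ x' u v - x u v ≤ resCap ν x u v
  netOut_eq_zero : ∀ w, w ≠ s → w ≠ t → netOut (x' - x) w = 0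
  onPath_of_ne : ∀ u v, u < v →
    (0 < x' u v - x u v → OnPath (resGraph ν x) k s t u v) ∧
      (x' u v - x u v < 0 → OnPath (resGraph ν x) k s t v u)
  exists_saturated : (∃ a b, OnPath (resGraph ν x) k s t a b) →
    ∃ a b, OnPath (resGraph ν x) k s t a b ∧ ¬ resGraph ν x' a b

lemma not_resGraph_of_saturates
    (h : if a < b then x' a b - x a b = resCap ν x a b else -(x' b a - x b a) = resCap ν x a b) :
    ¬ resGraph ν x' a b := by
  rw [resGraph, not_lt]
  rcases lt_trichotomy a b with hab | rfl | hba
  · rw [if_pos hab, resCap_of_lt hab] at h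
    rw [resCap_of_lt hab]
    linarith
  · rw [resCap_self]
  · rw [if_neg hba.not_gt, resCap_of_gt hba] at h
    rw [resCap_of_gt hba]
    linarith

namespace IsLayeredAugmentation

lemma isFeasibleFlow (h : IsLayeredAugmentation ν s t k x x') (hx : IsFeasibleFlow s t ν x) :
    IsFeasibleFlow s t ν x' := by
  rw [isFeasibleFlow_iff] at hx ⊢
  refine ⟨fun u v huv => ?_, fun w hws hwt => ?_⟩
  · have := h.le_resCap u v huv
    rw [resCap_of_lt huv, resCap_of_gt huv] at this
    constructor <;> linarith
  · have := h.netOut_eq_zero w hws hwt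
    rw [netOut_sub, hx.2 w hws hwt] at this
    linarith

lemma resGraph_or_onPath (h : IsLayeredAugmentation ν s t k x x') (u v : Fin N)
    (huv : resGraph ν x' u v) : resGraph ν x u v ∨ OnPath (resGraph ν x) k s t v u := by
  refine or_iff_not_imp_left.mpr fun huv₀ => ?_
  rw [resGraph, not_lt] at huv₀
  rw [resGraph] at huv
  rcases lt_trichotomy u v with hlt | rfl | hgt
  · rw [resCap_of_lt hlt] at huv huv₀
    exact (h.onPath_of_ne u v hlt).2 (by linarith)
  · exact absurd huv (by simp [resCap_self])
  · rw [resCap_of_gt hgt] at huv huv₀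
    exact (h.onPath_of_ne v u hgt).1 (by linarith)

lemma reversesShortestPathArcs (h : IsLayeredAugmentation ν s t k x x')
    (hx : ∀ ℓ < k, ¬ HasWalk (resGraph ν x) s t ℓ) :
    ReversesShortestPathArcs (resGraph ν x) (resGraph ν x') k s t :=
  ⟨hx, h.resGraph_or_onPath⟩

lemma card_pathArcs_lt (h : IsLayeredAugmentation ν s t k x x')
    (hx : ∀ ℓ < k, ¬ HasWalk (resGraph ν x) s t ℓ)
    (hne : (pathArcs (resGraph ν x) k s t).Nonempty) :
    #(pathArcs (resGraph ν x') k s t) < #(pathArcs (resGraph ν x) k s t) := by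
  obtain ⟨⟨a₀, b₀⟩, hp⟩ := hne
  obtain ⟨a, b, hab, hsat⟩ := h.exists_saturated ⟨a₀, b₀, mem_pathArcs.mp hp⟩
  refine card_lt_card <| (ssubset_iff_of_subset (h.reversesShortestPathArcs hx).pathArcs_subset).mpr
    ⟨(a, b), mem_pathArcs.mpr hab, fun hab' => hsat (mem_pathArcs.mp hab').rel⟩

end IsLayeredAugmentation

lemma pathArcs_resGraph_subset (hx : IsFeasibleFlow s t ν x) :
    pathArcs (resGraph ν x) k s t ⊆ univ.filter fun p => 0 < ν p.1 p.2 ∨ 0 < ν p.2 p.1 := by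
  intro ⟨u, v⟩ huv
  replace huv : 0 < resCap ν x u v := (mem_pathArcs.mp huv).rel
  simp only [mem_filter, mem_univ, true_and]
  by_contra! hν
  rcases lt_trichotomy u v with hlt | rfl | hgt
  · rw [resCap_of_lt hlt] at huv
    linarith [(hx.1 u v hlt).1]
  · simp [resCap_self] at huv
  · rw [resCap_of_gt hgt] at huv
    linarith [(hx.1 v u hgt).2]

end Augmentation

lemma not_hasWalk_le_of_phase {N : ℕ} {s t : Fin N} {ν : Fin N → Fin N → ℝ}
    {x : ℕ → Fin N → Fin N → ℝ} {j m k : ℕ} (hk : 0 < k)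
    (haug : ∀ r < m, IsLayeredAugmentation ν s t k (x (j + r)) (x (j + r + 1)))
    (hshort : ∀ ℓ < k, ¬ HasWalk (resGraph ν (x j)) s t ℓ)
    (hcard : #(pathArcs (resGraph ν (x j)) k s t) ≤ m) :
    ∀ ℓ ≤ k, ¬ HasWalk (resGraph ν (x (j + m))) s t ℓ := by
  have key : ∀ r ≤ m, (∀ ℓ < k, ¬ HasWalk (resGraph ν (x (j + r))) s t ℓ) ∧
      #(pathArcs (resGraph ν (x (j + r))) k s t) ≤ m - r := by
    intro r
    induction r with
    | zero => exact fun _ => ⟨hshort, hcard⟩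
    | succ r ih =>
      intro hr
      rw [← Nat.add_assoc]
      obtain ⟨hshort', hcard'⟩ := ih (by omega)
      have hA := (haug r (by omega)).reversesShortestPathArcs hshort'
      refine ⟨hA.not_hasWalk_lt', ?_⟩
      rcases (pathArcs (resGraph ν (x (j + r))) k s t).eq_empty_or_nonempty with he | hne
      · have := card_le_card hA.pathArcs_subset
        rw [he, card_empty] at this
        omega
      · have := (haug r (by omega)).card_pathArcs_lt hshort' hne
        omega
  obtain ⟨hshort', hempty⟩ := key m le_rfl
  intro ℓ hℓ hwalk
  rcases hℓ.lt_or_eq with hlt | rfl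
  · exact hshort' ℓ hlt hwalk
  · obtain ⟨a, b, hab⟩ := hwalk.exists_onPath hk
    have := card_pos.mpr ⟨(a, b), mem_pathArcs.mpr hab⟩
    omega

lemma not_hasWalk_le_of_phases {N m n : ℕ} {s t : Fin N} {ν : Fin N → Fin N → ℝ}
    {x : ℕ → Fin N → Fin N → ℝ} (hst : s ≠ t)
    (hm : #(univ.filter fun p : Fin N × Fin N => 0 < ν p.1 p.2 ∨ 0 < ν p.2 p.1) ≤ m)
    (haug : ∀ j < n * m, IsLayeredAugmentation ν s t (j / m + 1) (x j) (x (j + 1)))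
    (hfeas : ∀ j ≤ n * m, IsFeasibleFlow s t ν (x j)) :
    ∀ k ≤ n, ∀ ℓ ≤ k, ¬ HasWalk (resGraph ν (x (k * m))) s t ℓ := by
  intro k hk
  induction k with
  | zero => exact fun ℓ hℓ h => hst (Nat.le_zero.mp hℓ ▸ h).eq_of_length_zero
  | succ k ih =>
    rw [Nat.succ_mul]
    have hcard := card_le_card <|
      pathArcs_resGraph_subset (k := k + 1) (hfeas (k * m) (Nat.mul_le_mul_right m (by omega)))
    refine not_hasWalk_le_of_phase k.succ_pos (fun r hr => ?_)
      (fun ℓ hℓ => ih (by omega) ℓ (by omega)) (hcard.trans hm)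
    have hphase : (k * m + r) / m + 1 = k + 1 := by
      rw [Nat.add_comm (k * m), Nat.add_mul_div_right _ _ (by omega : 0 < m), Nat.div_eq_of_lt hr,
        zero_add]
    simpa [hphase] using haug (k * m + r) (by nlinarith)

/-- Theorem 7 of the paper (correctness of Algorithm 3): starting from the zero
flow, if for each phase `k = 1, …, N-1` one performs `m` augmentations, each along
a flow supported on arcs lying on `s`-`t`-paths of length exactly `k` in the
current residual network and saturating at least one such arc whenever one exists,
then the resulting flow is a maximum `s`-`t`-flow. Here `m` is (an upper bound on)
the number of arcs, and step `j` belongs to phase `k = j / m + 1`. -/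
theorem shortest_augmentation_scheme_gives_maxflow (N m : ℕ) (s t : Fin N)
    (hst : s ≠ t) (ν : Fin N → Fin N → ℝ) (hν : ∀ u v, 0 ≤ ν u v)
    (hm : (univ.filter (fun p : Fin N × Fin N => 0 < ν p.1 p.2 ∨ 0 < ν p.2 p.1)).card ≤ m)
    (x : ℕ → Fin N → Fin N → ℝ)
    (h0 : ∀ u v, x 0 u v = 0)
    (hstep : ∀ j < (N - 1) * m,
      let k := j / m + 1
      let A : Fin N → Fin N → Prop := fun u v => 0 < resCap ν (x j) u v
      let y : Fin N → Fin N → ℝ := fun u v => x (j + 1) u v - x j u v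
      (∀ u v : Fin N, u < v →
        -resCap ν (x j) v u ≤ y u v ∧ y u v ≤ resCap ν (x j) u v) ∧
      (∀ w : Fin N, w ≠ s → w ≠ t →
        ∑ u ∈ univ.filter (· < w), y u w = ∑ v ∈ univ.filter (w < ·), y w v) ∧
      (∀ u v : Fin N, u < v →
        (0 < y u v → OnPath A k s t u v) ∧ (y u v < 0 → OnPath A k s t v u)) ∧
      ((∃ a b : Fin N, OnPath A k s t a b) → ∃ a b : Fin N, OnPath A k s t a b ∧
        (if a < b then y a b = resCap ν (x j) a b else -(y b a) = resCap ν (x j) a b))) :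
    IsFeasibleFlow s t ν (x ((N - 1) * m)) ∧
    ∀ x' : Fin N → Fin N → ℝ, IsFeasibleFlow s t ν x' →
      flowValue s x' ≤ flowValue s (x ((N - 1) * m)) := by
  have haug : ∀ j < (N - 1) * m, IsLayeredAugmentation ν s t (j / m + 1) (x j) (x (j + 1)) := by
    intro j hj
    obtain ⟨hcap, hcons, hsupp, hsat⟩ := hstep j hj
    exact ⟨hcap, fun w hws hwt => netOut_eq_zero_iff.mpr (hcons w hws hwt), hsupp,
      fun hex => (hsat hex).imp fun a =>
        .imp fun b hab => ⟨hab.1, not_resGraph_of_saturates hab.2⟩⟩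
  have hfeas : ∀ j ≤ (N - 1) * m, IsFeasibleFlow s t ν (x j) := by
    intro j hj
    induction j with
    | zero => simpa [show x 0 = 0 from funext₂ h0] using isFeasibleFlow_zero hν
    | succ j ih => exact (haug j (by omega)).isFeasibleFlow (ih (by omega))
  have hfinal := hfeas _ le_rfl
  refine ⟨hfinal, fun x' hx' => flowValue_le_of_not_hasWalk hfinal (fun ℓ h => ?_) hx'⟩
  obtain ⟨ℓ', hℓ', h'⟩ := h.exists_lt_card
  rw [Fintype.card_fin] at hℓ'
  exact not_hasWalk_le_of_phases hst hm haug hfeas (N - 1) le_rfl ℓ' (by omega) h'
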